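/- For all n ≥ j ≥ 0, ŵ_α(n,j) = ∑_{k=j}^n w̃_α(n,k) · W̃_α(k,j), i.e., the translated Whitney-Lah numbers are the sums of products of translated Whitney numbers of the first and second kinds. -/

import Mathlib

open Finset

/-- The translated Whitney numbers of the first kind,
`w̃_α(n,k) = w̃_α(n−1,k−1) + α(n−1)·w̃_α(n−1,k)`. -/
def whitneyFirst {R : Type*} [CommRing R] (α : R) : ℕ → ℕ → R
  | 0, 0 => 1
  | 0, _ + 1 => 0
  | n + 1, 0 => α * n * whitneyFirst α n 0
  | n + 1, k + 1 => whitneyFirst α n k + α * n * whitneyFirst α n (k + 1)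

/-- The translated Whitney numbers of the second kind,
`W̃_α(n,k) = W̃_α(n−1,k−1) + αk·W̃_α(n−1,k)`. -/
def whitneySecond {R : Type*} [CommRing R] (α : R) : ℕ → ℕ → R
  | 0, 0 => 1
  | 0, _ + 1 => 0
  | _ + 1, 0 => 0
  | n + 1, k + 1 => whitneySecond α n k + α * (k + 1) * whitneySecond α n (k + 1)

/-- The translated Whitney-Lah numbers,
`ŵ_α(n,k) = ŵ_α(n−1,k−1) + α(n+k−1)·ŵ_α(n−1,k)`. -/
def whitneyLah {R : Type*} [CommRing R] (α : R) : ℕ → ℕ → R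
  | 0, 0 => 1
  | 0, _ + 1 => 0
  | n + 1, 0 => α * n * whitneyLah α n 0
  | n + 1, k + 1 => whitneyLah α n k + α * (n + k + 1) * whitneyLah α n (k + 1)


/-
The identity is the matrix factorisation `ŵ = w̃ · W̃` of lower triangular arrays, and it can be
checked on the defining recurrences: feeding the recurrence of `w̃` in the row index and that of
`W̃` in the column index into `∑ₖ w̃(n+1,k) W̃(k,j+1)` produces `α n + α (j+1) = α (n+j+1)`
times the old sum, which is exactly the recurrence of `ŵ`.
-/

section Whitney

variable {R : Type*} [CommRing R] (α : R)

theorem whitneyFirst_eq_zero_of_lt {n k : ℕ} (h : n < k) : whitneyFirst α n k = 0 := by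
  induction n generalizing k with
  | zero => obtain ⟨k, rfl⟩ := Nat.exists_eq_succ_of_ne_zero h.ne'; rfl
  | succ n ih =>
    obtain ⟨k, rfl⟩ := Nat.exists_eq_succ_of_ne_zero (n.succ_pos.trans h).ne'
    rw [whitneyFirst, ih (by omega), ih (by omega), mul_zero, add_zero]

theorem whitneySecond_eq_zero_of_lt {n k : ℕ} (h : n < k) : whitneySecond α n k = 0 := by
  induction n generalizing k with
  | zero => obtain ⟨k, rfl⟩ := Nat.exists_eq_succ_of_ne_zero h.ne'; rfl
  | succ n ih =>
    obtain ⟨k, rfl⟩ := Nat.exists_eq_succ_of_ne_zero (n.succ_pos.trans h).ne'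
    rw [whitneySecond, ih (by omega), ih (by omega), mul_zero, add_zero]

theorem sum_range_whitneyFirst_succ_mul (n : ℕ) (g : ℕ → R) :
    ∑ k ∈ range (n + 2), whitneyFirst α (n + 1) k * g k =
      ∑ k ∈ range (n + 1), whitneyFirst α n k * (g (k + 1) + α * n * g k) := by
  have hshift : ∑ k ∈ range (n + 1), whitneyFirst α n (k + 1) * g (k + 1) +
      whitneyFirst α n 0 * g 0 = ∑ k ∈ range (n + 1), whitneyFirst α n k * g k := by
    rw [← sum_range_succ' (fun k => whitneyFirst α n k * g k), sum_range_succ,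
      whitneyFirst_eq_zero_of_lt α n.lt_succ_self, zero_mul, add_zero]
  calc ∑ k ∈ range (n + 2), whitneyFirst α (n + 1) k * g k
      = ∑ k ∈ range (n + 1), whitneyFirst α n k * g (k + 1) + α * n *
          (∑ k ∈ range (n + 1), whitneyFirst α n (k + 1) * g (k + 1) + whitneyFirst α n 0 * g 0) := by
        simp only [sum_range_succ' _ (n + 1), whitneyFirst, add_mul, sum_add_distrib, mul_assoc,
          ← mul_sum]
        ring
    _ = ∑ k ∈ range (n + 1), whitneyFirst α n k * (g (k + 1) + α * n * g k) := by
        rw [hshift, mul_sum, ← sum_add_distrib]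
        exact sum_congr rfl fun k _ => by ring

theorem whitneyLah_eq_sum_range (n j : ℕ) :
    whitneyLah α n j = ∑ k ∈ range (n + 1), whitneyFirst α n k * whitneySecond α k j := by
  induction n generalizing j with
  | zero => cases j <;> simp [whitneyLah, whitneyFirst, whitneySecond]
  | succ n ih =>
    rw [sum_range_whitneyFirst_succ_mul]
    cases j with
    | zero =>
      rw [whitneyLah, ih, mul_sum]
      exact sum_congr rfl fun k _ => by rw [whitneySecond]; ring
    | succ j =>
      rw [whitneyLah, ih, ih (j + 1), mul_sum, ← sum_add_distrib]
      refine sum_congr rfl fun k _ => ?_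
      rw [whitneySecond]
      ring

end Whitney

theorem whitneyLah_eq_sum_whitney_general {R : Type*} [CommRing R] (α : R) (n j : ℕ) :
    whitneyLah α n j = ∑ k ∈ Finset.Icc j n, whitneyFirst α n k * whitneySecond α k j := by
  rw [whitneyLah_eq_sum_range]
  have hsub : Icc j n ⊆ range (n + 1) := fun k hk => by
    rw [mem_Icc] at hk
    exact mem_range.2 (Nat.lt_succ_of_le hk.2)
  refine (sum_subset hsub fun k hk hkIcc => ?_).symm
  have hkj : k < j := by
    rw [mem_range] at hk
    rw [mem_Icc] at hkIcc
    omega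
  rw [whitneySecond_eq_zero_of_lt α hkj, mul_zero]

/-- For all `n ≥ j ≥ 0`,
`ŵ_α(n,j) = ∑_{k=j}^n w̃_α(n,k) · W̃_α(k,j)`. -/
theorem whitneyLah_eq_sum_whitney {R : Type*} [CommRing R] (α : R) (n j : ℕ) (hjn : j ≤ n) :
    whitneyLah α n j = ∑ k ∈ Finset.Icc j n, whitneyFirst α n k * whitneySecond α k j :=
  whitneyLah_eq_sum_whitney_general α n j
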